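/- arXiv:2309.05215 — 2 statements merged into one kernel-verified Lean document; each statement's English description precedes it below -/
import Mathlib

section
/- Let (u_n) be a sequence in ℝ³ such that every u_n is nondegenerate, u_{i,n} → +∞, and the sequences (u_{j,n}) and (u_{k,n}) converge. If θ_ki^j(u_n) → 0, then h_jk^i(u_n) → +∞, h_ki^j(u_n) → +∞, and h_ij^k(u_n) → −∞. -/
open Real Filter Topology

/-- Edge length of a decorated edge with inversive distance `I`, base radii `ra, rb`
and conformal factors `x, y`. -/
noncomputable def elen (I ra rb x y : ℝ) : ℝ :=
  Real.sqrt ((Real.exp x * ra) ^ 2 + (Real.exp y * rb) ^ 2 +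
    2 * I * (Real.exp x * ra) * (Real.exp y * rb))

/-- Inner angle of a Euclidean triangle opposite the side `lc`, adjacent to `la, lb`. -/
noncomputable def ang (la lb lc : ℝ) : ℝ :=
  Real.arccos ((la ^ 2 + lb ^ 2 - lc ^ 2) / (2 * la * lb))

/-- Signed distance of the edge center to the vertex with scaled radius `ra`. -/
noncomputable def dCen (I ra rb l : ℝ) : ℝ := (ra ^ 2 + I * ra * rb) / l

/-- Signed height `(d_ac - d_ab * cos th) / sin th`. -/
noncomputable def hgt (dac dab th : ℝ) : ℝ := (dac - dab * Real.cos th) / Real.sin th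

/-- Strict triangle inequalities for three side lengths. -/
def Nondeg (a b c : ℝ) : Prop := a < b + c ∧ b < c + a ∧ c < a + b

noncomputable def Lij (ri rj rk Iij Ijk Iki ui uj uk : ℝ) : ℝ := elen Iij ri rj ui uj
noncomputable def Ljk (ri rj rk Iij Ijk Iki ui uj uk : ℝ) : ℝ := elen Ijk rj rk uj uk
noncomputable def Lki (ri rj rk Iij Ijk Iki ui uj uk : ℝ) : ℝ := elen Iki rk ri uk ui

/-- Inner angle `θ_jk^i` at vertex `i`. -/
noncomputable def ThI (ri rj rk Iij Ijk Iki ui uj uk : ℝ) : ℝ :=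
  ang (Lij ri rj rk Iij Ijk Iki ui uj uk) (Lki ri rj rk Iij Ijk Iki ui uj uk)
    (Ljk ri rj rk Iij Ijk Iki ui uj uk)

/-- Inner angle `θ_ki^j` at vertex `j`. -/
noncomputable def ThJ (ri rj rk Iij Ijk Iki ui uj uk : ℝ) : ℝ :=
  ang (Lij ri rj rk Iij Ijk Iki ui uj uk) (Ljk ri rj rk Iij Ijk Iki ui uj uk)
    (Lki ri rj rk Iij Ijk Iki ui uj uk)

/-- Inner angle `θ_ij^k` at vertex `k`. -/
noncomputable def ThK (ri rj rk Iij Ijk Iki ui uj uk : ℝ) : ℝ :=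
  ang (Ljk ri rj rk Iij Ijk Iki ui uj uk) (Lki ri rj rk Iij Ijk Iki ui uj uk)
    (Lij ri rj rk Iij Ijk Iki ui uj uk)

noncomputable def Dij (ri rj rk Iij Ijk Iki ui uj uk : ℝ) : ℝ :=
  dCen Iij (Real.exp ui * ri) (Real.exp uj * rj) (Lij ri rj rk Iij Ijk Iki ui uj uk)
noncomputable def Dji (ri rj rk Iij Ijk Iki ui uj uk : ℝ) : ℝ :=
  dCen Iij (Real.exp uj * rj) (Real.exp ui * ri) (Lij ri rj rk Iij Ijk Iki ui uj uk)
noncomputable def Djk (ri rj rk Iij Ijk Iki ui uj uk : ℝ) : ℝ :=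
  dCen Ijk (Real.exp uj * rj) (Real.exp uk * rk) (Ljk ri rj rk Iij Ijk Iki ui uj uk)
noncomputable def Dkj (ri rj rk Iij Ijk Iki ui uj uk : ℝ) : ℝ :=
  dCen Ijk (Real.exp uk * rk) (Real.exp uj * rj) (Ljk ri rj rk Iij Ijk Iki ui uj uk)
noncomputable def Dki (ri rj rk Iij Ijk Iki ui uj uk : ℝ) : ℝ :=
  dCen Iki (Real.exp uk * rk) (Real.exp ui * ri) (Lki ri rj rk Iij Ijk Iki ui uj uk)
noncomputable def Dik (ri rj rk Iij Ijk Iki ui uj uk : ℝ) : ℝ :=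
  dCen Iki (Real.exp ui * ri) (Real.exp uk * rk) (Lki ri rj rk Iij Ijk Iki ui uj uk)

/-- The height `h_ij^k`. -/
noncomputable def Hijk (ri rj rk Iij Ijk Iki ui uj uk : ℝ) : ℝ :=
  hgt (Dik ri rj rk Iij Ijk Iki ui uj uk) (Dij ri rj rk Iij Ijk Iki ui uj uk)
    (ThI ri rj rk Iij Ijk Iki ui uj uk)

/-- The height `h_ik^j`. -/
noncomputable def Hikj (ri rj rk Iij Ijk Iki ui uj uk : ℝ) : ℝ :=
  hgt (Dij ri rj rk Iij Ijk Iki ui uj uk) (Dik ri rj rk Iij Ijk Iki ui uj uk)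
    (ThI ri rj rk Iij Ijk Iki ui uj uk)

/-- The height `h_jk^i`. -/
noncomputable def Hjki (ri rj rk Iij Ijk Iki ui uj uk : ℝ) : ℝ :=
  hgt (Dji ri rj rk Iij Ijk Iki ui uj uk) (Djk ri rj rk Iij Ijk Iki ui uj uk)
    (ThJ ri rj rk Iij Ijk Iki ui uj uk)

/-- The height `h_ki^j`. -/
noncomputable def Hkij (ri rj rk Iij Ijk Iki ui uj uk : ℝ) : ℝ :=
  hgt (Dkj ri rj rk Iij Ijk Iki ui uj uk) (Dki ri rj rk Iij Ijk Iki ui uj uk)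
    (ThK ri rj rk Iij Ijk Iki ui uj uk)

/-- The area `A_ijk = (1/2) l_ij l_jk sin θ_ki^j`. -/
noncomputable def Area (ri rj rk Iij Ijk Iki ui uj uk : ℝ) : ℝ :=
  (1 / 2) * Lij ri rj rk Iij Ijk Iki ui uj uk * Ljk ri rj rk Iij Ijk Iki ui uj uk *
    Real.sin (ThJ ri rj rk Iij Ijk Iki ui uj uk)

/-- Nondegeneracy of the decorated triangle at `u`. -/
def NondegT (ri rj rk Iij Ijk Iki ui uj uk : ℝ) : Prop :=
  Nondeg (Lij ri rj rk Iij Ijk Iki ui uj uk) (Ljk ri rj rk Iij Ijk Iki ui uj uk)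
    (Lki ri rj rk Iij Ijk Iki ui uj uk)

/-!
Write `R_j, R_k` for the limits of the scaled radii `r_j(u_n), r_k(u_n)` and `L` for the limit of
`l_jk`. The edges `ij` and `ki` grow like `r_i(u_n)` with `l_ij - l_ki → I_ij R_j - I_ki R_k`, so
`cos θ_ki^j → (I_ij R_j - I_ki R_k) / L`. Hence `θ_ki^j → 0` forces `I_ij R_j - I_ki R_k = L`, and then
`cos θ_ij^k → -1`. A height `(d - d' cos θ) / sin θ` with `sin θ → 0⁺` diverges with the sign of the
limit of its numerator. For `h_jk^i` this limit is `I_ij R_j - lim d_jk`, positive because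
`lim d_jk < L < I_ij R_j`; for `h_ki^j` it is `lim d_kj + I_ki R_k > 0`. At vertex `i` the numerator of
`h_ij^k` is an indeterminate difference, but `h_ij^k` is the distance from the power center of the
three circles to edge `ij`, so it can also be computed at vertex `j` as
`(d_jk - d_ji cos θ_ki^j) / sin θ_ki^j`, whose numerator tends to `lim d_jk - I_ij R_j < 0`.
-/

noncomputable def edgeLength (I r s : ℝ) : ℝ := √(r ^ 2 + s ^ 2 + 2 * I * r * s)

-- `16 · area²` of a triangle with sides `a, b, c` (Heron's formula).
noncomputable def heron (a b c : ℝ) : ℝ := (a + b + c) * (b + c - a) * (c + a - b) * (a + b - c)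

section Triangle

variable {a b c : ℝ}

lemma Nondeg.rotate (h : Nondeg a b c) : Nondeg b c a := ⟨h.2.1, h.2.2, h.1⟩

lemma Nondeg.swap (h : Nondeg a b c) : Nondeg b a c := by
  obtain ⟨hab, hbc, hca⟩ := h
  exact ⟨by linarith, by linarith, by linarith⟩

lemma Nondeg.pos (h : Nondeg a b c) : 0 < a := by linarith [h.2.1, h.2.2]

lemma heron_pos (h : Nondeg a b c) : 0 < heron a b c := by
  obtain ⟨hab, hbc, hca⟩ := h
  unfold heron
  exact mul_pos (mul_pos (mul_pos (by linarith) (by linarith)) (by linarith)) (by linarith)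

lemma heron_right_comm (a b c : ℝ) : heron a b c = heron a c b := by unfold heron; ring

lemma ang_comm (a b c : ℝ) : ang a b c = ang b a c := by unfold ang; ring_nf

lemma one_sub_sq_cos_quot (ha : a ≠ 0) (hb : b ≠ 0) :
    1 - ((a ^ 2 + b ^ 2 - c ^ 2) / (2 * a * b)) ^ 2 = heron a b c / (2 * a * b) ^ 2 := by
  unfold heron; field_simp; ring

lemma cos_ang (h : Nondeg a b c) : cos (ang a b c) = (a ^ 2 + b ^ 2 - c ^ 2) / (2 * a * b) := by
  have hsq := one_sub_sq_cos_quot (c := c) h.pos.ne' h.rotate.pos.ne'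
  have hlt : ((a ^ 2 + b ^ 2 - c ^ 2) / (2 * a * b)) ^ 2 < 1 := by
    have := div_pos (heron_pos h) (pow_pos (mul_pos (mul_pos two_pos h.pos) h.rotate.pos) 2)
    linarith
  obtain ⟨h₁, h₂⟩ := abs_lt.1 ((sq_lt_one_iff_abs_lt_one _).1 hlt)
  exact cos_arccos h₁.le h₂.le

lemma sin_ang (h : Nondeg a b c) : sin (ang a b c) = √(heron a b c) / (2 * a * b) := by
  have hab : 0 < 2 * a * b := mul_pos (mul_pos two_pos h.pos) h.rotate.pos
  rw [ang, sin_arccos, one_sub_sq_cos_quot h.pos.ne' h.rotate.pos.ne',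
    sqrt_div' _ (sq_nonneg _), sqrt_sq hab.le]

lemma sin_ang_pos (h : Nondeg a b c) : 0 < sin (ang a b c) := by
  rw [sin_ang h]
  exact div_pos (sqrt_pos.2 (heron_pos h)) (mul_pos (mul_pos two_pos h.pos) h.rotate.pos)

lemma hgt_ang (h : Nondeg a b c) (p q : ℝ) :
    hgt p q (ang a b c) = (2 * a * b * p - q * (a ^ 2 + b ^ 2 - c ^ 2)) / √(heron a b c) := by
  have ha := h.pos.ne'
  have hb := h.rotate.pos.ne'
  have hH := (sqrt_pos.2 (heron_pos h)).ne'
  rw [hgt, cos_ang h, sin_ang h]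
  field_simp

end Triangle

section Limits

variable {ι : Type*} {l : Filter ι}

lemma tendsto_inv_sin_atTop {θ : ι → ℝ} {c : ℝ} (hcos : Tendsto (fun n => cos (θ n)) l (𝓝 c))
    (hc : c ^ 2 = 1) (hsin : ∀ᶠ n in l, 0 < sin (θ n)) :
    Tendsto (fun n => (sin (θ n))⁻¹) l atTop := by
  have hsq : Tendsto (fun n => sin (θ n) ^ 2) l (𝓝 0) := by
    have := (tendsto_const_nhds (x := (1 : ℝ))).sub (hcos.pow 2)
    rw [hc, sub_self] at this
    exact this.congr fun n => (sin_sq (θ n)).symm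
  have hsin0 : Tendsto (fun n => sin (θ n)) l (𝓝 0) := by
    rw [tendsto_zero_iff_abs_tendsto_zero]
    simpa only [Function.comp_def, sqrt_sq_eq_abs, sqrt_zero] using hsq.sqrt
  exact (tendsto_nhdsWithin_iff.2 ⟨hsin0, hsin⟩).inv_tendsto_nhdsGT_zero

variable {p q θ : ι → ℝ} {P Q c : ℝ}

lemma tendsto_hgt_atTop (hp : Tendsto p l (𝓝 P)) (hq : Tendsto q l (𝓝 Q))
    (hcos : Tendsto (fun n => cos (θ n)) l (𝓝 c)) (hc : c ^ 2 = 1)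
    (hsin : ∀ᶠ n in l, 0 < sin (θ n)) (hpos : 0 < P - Q * c) :
    Tendsto (fun n => hgt (p n) (q n) (θ n)) l atTop := by
  simpa only [hgt, div_eq_mul_inv] using
    (hp.sub (hq.mul hcos)).pos_mul_atTop hpos (tendsto_inv_sin_atTop hcos hc hsin)

lemma tendsto_hgt_atBot (hp : Tendsto p l (𝓝 P)) (hq : Tendsto q l (𝓝 Q))
    (hcos : Tendsto (fun n => cos (θ n)) l (𝓝 c)) (hc : c ^ 2 = 1)
    (hsin : ∀ᶠ n in l, 0 < sin (θ n)) (hneg : P - Q * c < 0) :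
    Tendsto (fun n => hgt (p n) (q n) (θ n)) l atBot := by
  simpa only [hgt, div_eq_mul_inv] using
    (hp.sub (hq.mul hcos)).neg_mul_atTop hneg (tendsto_inv_sin_atTop hcos hc hsin)

lemma tendsto_cos_quot_of_tendsto_atTop {x la lb lc : ι → ℝ} {L D : ℝ}
    (hx : Tendsto x l atTop) (ha : Tendsto (fun n => la n / x n) l (𝓝 1))
    (hb : Tendsto lb l (𝓝 L)) (hL : L ≠ 0)
    (hac : Tendsto (fun n => (la n ^ 2 - lc n ^ 2) / x n) l (𝓝 (2 * D))) :
    Tendsto (fun n => (la n ^ 2 + lb n ^ 2 - lc n ^ 2) / (2 * la n * lb n)) l (𝓝 (D / L)) := by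
  have h := (hac.add ((hb.pow 2).div_atTop hx)).div
    ((tendsto_const_nhds (x := (2 : ℝ))).mul ha |>.mul hb) (by simpa using hL)
  rw [add_zero, mul_one, mul_div_mul_left _ _ two_ne_zero] at h
  refine h.congr' ?_
  filter_upwards [hx.eventually_gt_atTop 0] with n hn
  rw [Pi.div_apply, ← div_div_div_cancel_right₀ hn.ne' (la n ^ 2 + lb n ^ 2 - lc n ^ 2)]
  congr 1 <;> ring

end Limits

section EdgeLength

variable {I r s : ℝ}

lemma edgeLength_comm (I r s : ℝ) : edgeLength I r s = edgeLength I s r := by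
  unfold edgeLength; ring_nf

lemma sq_edgeLength (h : 0 < edgeLength I r s) : edgeLength I r s ^ 2 = r ^ 2 + s ^ 2 + 2 * I * r * s :=
  sq_sqrt (sqrt_pos.1 h).le

lemma edgeLength_pos (hr : 0 < r) (hs : 0 < s) (hI : 0 ≤ I) : 0 < edgeLength I r s :=
  sqrt_pos.2 (by positivity)

lemma dCen_pos (hr : 0 < r) (hs : 0 < s) (hI : 0 ≤ I) {ℓ : ℝ} (hℓ : 0 < ℓ) : 0 < dCen I r s ℓ :=
  div_pos (by positivity) hℓ

lemma dCen_lt_edgeLength (hr : 0 < r) (hs : 0 < s) (hI : 0 ≤ I) :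
    dCen I r s (edgeLength I r s) < edgeLength I r s := by
  have hℓ := edgeLength_pos hr hs hI
  rw [dCen, div_lt_iff₀ hℓ, ← sq, sq_edgeLength hℓ]
  nlinarith [mul_nonneg (mul_nonneg hI hr.le) hs.le]

variable {ι : Type*} {l : Filter ι} {x y z ℓ : ι → ℝ} {R S L : ℝ}

lemma tendsto_edgeLength (hy : Tendsto y l (𝓝 R)) (hz : Tendsto z l (𝓝 S)) :
    Tendsto (fun n => edgeLength I (y n) (z n)) l (𝓝 (edgeLength I R S)) :=
  (((hy.pow 2).add (hz.pow 2)).add ((tendsto_const_nhds.mul hy).mul hz)).sqrt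

lemma tendsto_dCen (hy : Tendsto y l (𝓝 R)) (hz : Tendsto z l (𝓝 S))
    (hℓ : Tendsto ℓ l (𝓝 L)) (hL : L ≠ 0) :
    Tendsto (fun n => dCen I (y n) (z n) (ℓ n)) l (𝓝 (dCen I R S L)) :=
  ((hy.pow 2).add ((tendsto_const_nhds.mul hy).mul hz)).div hℓ hL

lemma tendsto_edgeLength_div (hx : Tendsto x l atTop) (hy : Tendsto y l (𝓝 R)) :
    Tendsto (fun n => edgeLength I (x n) (y n) / x n) l (𝓝 1) := by
  have hyx := hy.div_atTop hx
  have h := (((tendsto_const_nhds (x := (1 : ℝ))).add (hyx.pow 2)).add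
    ((tendsto_const_nhds (x := 2 * I)).mul hyx)).sqrt
  rw [zero_pow two_ne_zero, mul_zero, add_zero, add_zero, sqrt_one] at h
  refine h.congr' ?_
  filter_upwards [hx.eventually_gt_atTop 0] with n hn
  rw [edgeLength, ← sqrt_sq hn.le, ← sqrt_div' _ (sq_nonneg _), sqrt_sq hn.le]
  congr 1
  field_simp

lemma tendsto_dCen_of_tendsto_atTop (hx : Tendsto x l atTop) (hy : Tendsto y l (𝓝 R))
    (hℓ : Tendsto (fun n => ℓ n / x n) l (𝓝 1)) :
    Tendsto (fun n => dCen I (y n) (x n) (ℓ n)) l (𝓝 (I * R)) := by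
  have h := (((hy.pow 2).div_atTop hx).add ((tendsto_const_nhds (x := I)).mul hy)).div hℓ
    one_ne_zero
  rw [zero_add, div_one] at h
  refine h.congr' ?_
  filter_upwards [hx.eventually_gt_atTop 0] with n hn
  rw [Pi.div_apply, dCen, ← div_div_div_cancel_right₀ hn.ne' (y n ^ 2 + I * y n * x n)]
  congr 1
  field_simp

lemma tendsto_sq_edgeLength_sub_div (hx : Tendsto x l atTop) (hy : Tendsto y l (𝓝 R))
    (hz : Tendsto z l (𝓝 S)) {J : ℝ}
    (hpos : ∀ᶠ n in l, 0 < edgeLength I (x n) (y n) ∧ 0 < edgeLength J (z n) (x n)) :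
    Tendsto (fun n => (edgeLength I (x n) (y n) ^ 2 - edgeLength J (z n) (x n) ^ 2) / x n) l
      (𝓝 (2 * (I * R - J * S))) := by
  have h := (((hy.pow 2).sub (hz.pow 2)).div_atTop hx).add
    ((tendsto_const_nhds (x := (2 : ℝ))).mul
      (((tendsto_const_nhds (x := I)).mul hy).sub ((tendsto_const_nhds (x := J)).mul hz)))
  rw [zero_add] at h
  refine h.congr' ?_
  filter_upwards [hx.eventually_gt_atTop 0, hpos] with n hn ⟨hA, hC⟩
  rw [sq_edgeLength hA, sq_edgeLength hC]
  field_simp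
  ring

end EdgeLength

-- Both sides are the signed distance from the power center of the three circles to edge `ij`.
lemma hgt_edge_ij_at_i_eq_at_j {Iij Ijk Iki x y z : ℝ}
    (h : Nondeg (edgeLength Iij x y) (edgeLength Ijk y z) (edgeLength Iki z x)) :
    hgt (dCen Iki x z (edgeLength Iki z x)) (dCen Iij x y (edgeLength Iij x y))
        (ang (edgeLength Iij x y) (edgeLength Iki z x) (edgeLength Ijk y z)) =
      hgt (dCen Ijk y z (edgeLength Ijk y z)) (dCen Iij y x (edgeLength Iij x y))
        (ang (edgeLength Iij x y) (edgeLength Ijk y z) (edgeLength Iki z x)) := by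
  rw [hgt_ang h.rotate.rotate.swap, hgt_ang h, heron_right_comm]
  congr 1
  have hA := sq_edgeLength h.pos
  have hB := sq_edgeLength h.rotate.pos
  have hC := sq_edgeLength h.rotate.rotate.pos
  have hA0 := h.pos.ne'
  have hB0 := h.rotate.pos.ne'
  have hC0 := h.rotate.rotate.pos.ne'
  generalize edgeLength Iij x y = lA at *
  generalize edgeLength Ijk y z = lB at *
  generalize edgeLength Iki z x = lC at *
  unfold dCen
  field_simp
  linear_combination (x ^ 2 - y ^ 2 + 2 * Iki * x * z - 2 * Ijk * y * z) * hA
    - (x ^ 2 + y ^ 2 + 2 * Iij * x * y) * (hC - hB)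

lemma Hijk_eq_hgt_ThJ {ri rj rk Iij Ijk Iki ui uj uk : ℝ}
    (h : NondegT ri rj rk Iij Ijk Iki ui uj uk) :
    Hijk ri rj rk Iij Ijk Iki ui uj uk =
      hgt (Djk ri rj rk Iij Ijk Iki ui uj uk) (Dji ri rj rk Iij Ijk Iki ui uj uk)
        (ThJ ri rj rk Iij Ijk Iki ui uj uk) :=
  hgt_edge_ij_at_i_eq_at_j h

section FarVertex

variable {ri rj rk Iij Ijk Iki R S : ℝ} {a b c : ℕ → ℝ}

lemma tendsto_Lij_div (hx : Tendsto (fun n => exp (a n) * ri) atTop atTop)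
    (hy : Tendsto (fun n => exp (b n) * rj) atTop (𝓝 R)) :
    Tendsto (fun n => Lij ri rj rk Iij Ijk Iki (a n) (b n) (c n) / (exp (a n) * ri)) atTop (𝓝 1) :=
  tendsto_edgeLength_div hx hy

lemma tendsto_Lki_div (hx : Tendsto (fun n => exp (a n) * ri) atTop atTop)
    (hz : Tendsto (fun n => exp (c n) * rk) atTop (𝓝 S)) :
    Tendsto (fun n => Lki ri rj rk Iij Ijk Iki (a n) (b n) (c n) / (exp (a n) * ri)) atTop (𝓝 1) :=
  (tendsto_edgeLength_div hx hz).congr fun n => by rw [edgeLength_comm]; rfl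

lemma tendsto_Ljk (hy : Tendsto (fun n => exp (b n) * rj) atTop (𝓝 R))
    (hz : Tendsto (fun n => exp (c n) * rk) atTop (𝓝 S)) :
    Tendsto (fun n => Ljk ri rj rk Iij Ijk Iki (a n) (b n) (c n)) atTop
      (𝓝 (edgeLength Ijk R S)) :=
  tendsto_edgeLength hy hz

lemma tendsto_Dji (hx : Tendsto (fun n => exp (a n) * ri) atTop atTop)
    (hy : Tendsto (fun n => exp (b n) * rj) atTop (𝓝 R)) :
    Tendsto (fun n => Dji ri rj rk Iij Ijk Iki (a n) (b n) (c n)) atTop (𝓝 (Iij * R)) :=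
  tendsto_dCen_of_tendsto_atTop hx hy (tendsto_Lij_div hx hy)

lemma tendsto_Dki (hx : Tendsto (fun n => exp (a n) * ri) atTop atTop)
    (hz : Tendsto (fun n => exp (c n) * rk) atTop (𝓝 S)) :
    Tendsto (fun n => Dki ri rj rk Iij Ijk Iki (a n) (b n) (c n)) atTop (𝓝 (Iki * S)) :=
  tendsto_dCen_of_tendsto_atTop hx hz (tendsto_Lki_div hx hz)

lemma tendsto_Djk (hy : Tendsto (fun n => exp (b n) * rj) atTop (𝓝 R))
    (hz : Tendsto (fun n => exp (c n) * rk) atTop (𝓝 S))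
    (hL : edgeLength Ijk R S ≠ 0) :
    Tendsto (fun n => Djk ri rj rk Iij Ijk Iki (a n) (b n) (c n)) atTop
      (𝓝 (dCen Ijk R S (edgeLength Ijk R S))) :=
  tendsto_dCen hy hz (tendsto_Ljk hy hz) hL

lemma tendsto_Dkj (hy : Tendsto (fun n => exp (b n) * rj) atTop (𝓝 R))
    (hz : Tendsto (fun n => exp (c n) * rk) atTop (𝓝 S))
    (hL : edgeLength Ijk R S ≠ 0) :
    Tendsto (fun n => Dkj ri rj rk Iij Ijk Iki (a n) (b n) (c n)) atTop
      (𝓝 (dCen Ijk S R (edgeLength Ijk R S))) :=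
  tendsto_dCen hz hy (tendsto_Ljk hy hz) hL

lemma tendsto_sq_Lij_sub_sq_Lki_div (hx : Tendsto (fun n => exp (a n) * ri) atTop atTop)
    (hy : Tendsto (fun n => exp (b n) * rj) atTop (𝓝 R))
    (hz : Tendsto (fun n => exp (c n) * rk) atTop (𝓝 S))
    (hnd : ∀ n, NondegT ri rj rk Iij Ijk Iki (a n) (b n) (c n)) :
    Tendsto (fun n => (Lij ri rj rk Iij Ijk Iki (a n) (b n) (c n) ^ 2 -
      Lki ri rj rk Iij Ijk Iki (a n) (b n) (c n) ^ 2) / (exp (a n) * ri)) atTop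
      (𝓝 (2 * (Iij * R - Iki * S))) :=
  tendsto_sq_edgeLength_sub_div hx hy hz
    (Eventually.of_forall fun n => ⟨(hnd n).pos, (hnd n).rotate.rotate.pos⟩)

lemma tendsto_cos_ThJ (hx : Tendsto (fun n => exp (a n) * ri) atTop atTop)
    (hy : Tendsto (fun n => exp (b n) * rj) atTop (𝓝 R))
    (hz : Tendsto (fun n => exp (c n) * rk) atTop (𝓝 S))
    (hnd : ∀ n, NondegT ri rj rk Iij Ijk Iki (a n) (b n) (c n))
    (hL : edgeLength Ijk R S ≠ 0) :
    Tendsto (fun n => cos (ThJ ri rj rk Iij Ijk Iki (a n) (b n) (c n))) atTop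
      (𝓝 ((Iij * R - Iki * S) / edgeLength Ijk R S)) :=
  (tendsto_cos_quot_of_tendsto_atTop hx (tendsto_Lij_div hx hy) (tendsto_Ljk hy hz) hL
    (tendsto_sq_Lij_sub_sq_Lki_div hx hy hz hnd)).congr fun n => (cos_ang (hnd n)).symm

lemma tendsto_cos_ThK (hx : Tendsto (fun n => exp (a n) * ri) atTop atTop)
    (hy : Tendsto (fun n => exp (b n) * rj) atTop (𝓝 R))
    (hz : Tendsto (fun n => exp (c n) * rk) atTop (𝓝 S))
    (hnd : ∀ n, NondegT ri rj rk Iij Ijk Iki (a n) (b n) (c n))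
    (hL : edgeLength Ijk R S ≠ 0) :
    Tendsto (fun n => cos (ThK ri rj rk Iij Ijk Iki (a n) (b n) (c n))) atTop
      (𝓝 ((Iki * S - Iij * R) / edgeLength Ijk R S)) := by
  have hdiff := (tendsto_sq_Lij_sub_sq_Lki_div hx hy hz hnd).neg
  rw [← mul_neg, neg_sub] at hdiff
  refine (tendsto_cos_quot_of_tendsto_atTop (lb := fun n => Ljk ri rj rk Iij Ijk Iki (a n) (b n) (c n))
    hx (tendsto_Lki_div hx hz) (tendsto_Ljk hy hz) hL (hdiff.congr fun n => by ring)).congr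
    fun n => ?_
  rw [ThK, ang_comm, cos_ang (hnd n).rotate.swap]

lemma sub_eq_edgeLength_of_tendsto_ThJ (hx : Tendsto (fun n => exp (a n) * ri) atTop atTop)
    (hy : Tendsto (fun n => exp (b n) * rj) atTop (𝓝 R))
    (hz : Tendsto (fun n => exp (c n) * rk) atTop (𝓝 S))
    (hnd : ∀ n, NondegT ri rj rk Iij Ijk Iki (a n) (b n) (c n))
    (hL : 0 < edgeLength Ijk R S)
    (hθ : Tendsto (fun n => ThJ ri rj rk Iij Ijk Iki (a n) (b n) (c n)) atTop (𝓝 0)) :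
    Iij * R - Iki * S = edgeLength Ijk R S := by
  have h := tendsto_nhds_unique (tendsto_cos_ThJ hx hy hz hnd hL.ne')
    (by simpa only [Function.comp_def, cos_zero] using (continuous_cos.tendsto 0).comp hθ)
  rwa [div_eq_one_iff_eq hL.ne'] at h

end FarVertex

theorem heights_diverge_general (ri rj rk Iij Ijk Iki : ℝ) (hri : 0 < ri) (hrj : 0 < rj) (hrk : 0 < rk)
    (hIjk : 1 < Ijk) (hIki : 1 < Iki)
    (a b c : ℕ → ℝ) (aj ak : ℝ)
    (hnd : ∀ n, NondegT ri rj rk Iij Ijk Iki (a n) (b n) (c n))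
    (ha : Tendsto a atTop atTop) (hb : Tendsto b atTop (𝓝 aj))
    (hc : Tendsto c atTop (𝓝 ak))
    (hθj : Tendsto (fun n => ThJ ri rj rk Iij Ijk Iki (a n) (b n) (c n)) atTop (𝓝 0)) :
    Tendsto (fun n => Hjki ri rj rk Iij Ijk Iki (a n) (b n) (c n)) atTop atTop ∧
    Tendsto (fun n => Hkij ri rj rk Iij Ijk Iki (a n) (b n) (c n)) atTop atTop ∧
    Tendsto (fun n => Hijk ri rj rk Iij Ijk Iki (a n) (b n) (c n)) atTop atBot := by
  have hx := (tendsto_exp_atTop.comp ha).atTop_mul_const hri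
  have hy := ((continuous_exp.tendsto aj).comp hb).mul_const rj
  have hz := ((continuous_exp.tendsto ak).comp hc).mul_const rk
  set Rj := exp aj * rj
  set Rk := exp ak * rk
  set L := edgeLength Ijk Rj Rk
  have hRj : 0 < Rj := by positivity
  have hRk : 0 < Rk := by positivity
  have hL : 0 < L := edgeLength_pos hRj hRk (by linarith)
  have hkey := sub_eq_edgeLength_of_tendsto_ThJ hx hy hz hnd hL hθj
  have hcosJ := tendsto_cos_ThJ hx hy hz hnd hL.ne'
  have hcosK := tendsto_cos_ThK hx hy hz hnd hL.ne'
  rw [hkey, div_self hL.ne'] at hcosJ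
  rw [← neg_sub, hkey, neg_div, div_self hL.ne'] at hcosK
  have hIkiRk : 0 < Iki * Rk := mul_pos (by linarith) hRk
  have hDjk : dCen Ijk Rj Rk L < Iij * Rj :=
    (dCen_lt_edgeLength hRj hRk (by linarith)).trans_le (by linarith)
  have hDkj : 0 < dCen Ijk Rk Rj L := dCen_pos hRk hRj (by linarith) hL
  have hsinJ := Eventually.of_forall (f := atTop) fun n => sin_ang_pos (hnd n)
  have hsinK := Eventually.of_forall (f := atTop) fun n => sin_ang_pos (hnd n).rotate
  refine ⟨?_, ?_, ?_⟩
  · exact tendsto_hgt_atTop (tendsto_Dji hx hy) (tendsto_Djk hy hz hL.ne') hcosJ (one_pow 2)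
      hsinJ (by linarith)
  · exact tendsto_hgt_atTop (tendsto_Dkj hy hz hL.ne') (tendsto_Dki hx hz) hcosK (by norm_num)
      hsinK (by linarith)
  · simp only [Hijk_eq_hgt_ThJ (hnd _)]
    exact tendsto_hgt_atBot (tendsto_Djk hy hz hL.ne') (tendsto_Dji hx hy) hcosJ (one_pow 2)
      hsinJ (by linarith)

/-- If `u_i → +∞`, `u_j, u_k` converge and `θ_ki^j → 0`, then
`h_jk^i → +∞`, `h_ki^j → +∞` and `h_ij^k → -∞`. -/
theorem heights_diverge (ri rj rk Iij Ijk Iki : ℝ) (hri : 0 < ri) (hrj : 0 < rj) (hrk : 0 < rk)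
    (hIij : 1 < Iij) (hIjk : 1 < Ijk) (hIki : 1 < Iki)
    (a b c : ℕ → ℝ) (aj ak : ℝ)
    (hnd : ∀ n, NondegT ri rj rk Iij Ijk Iki (a n) (b n) (c n))
    (ha : Tendsto a atTop atTop) (hb : Tendsto b atTop (𝓝 aj))
    (hc : Tendsto c atTop (𝓝 ak))
    (hθj : Tendsto (fun n => ThJ ri rj rk Iij Ijk Iki (a n) (b n) (c n)) atTop (𝓝 0)) :
    Tendsto (fun n => Hjki ri rj rk Iij Ijk Iki (a n) (b n) (c n)) atTop atTop ∧
    Tendsto (fun n => Hkij ri rj rk Iij Ijk Iki (a n) (b n) (c n)) atTop atTop ∧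
    Tendsto (fun n => Hijk ri rj rk Iij Ijk Iki (a n) (b n) (c n)) atTop atBot :=
  heights_diverge_general ri rj rk Iij Ijk Iki hri hrj hrk hIjk hIki a b c aj ak hnd ha hb hc hθj
end

section
/- Let (u_n) be a sequence in ℝ³ with every u_n nondegenerate, let (t_n) be a sequence of reals, and suppose u_{i,n} − t_n → +∞, u_{j,n} − t_n → a_j, u_{k,n} − t_n → a_k for some reals a_j, a_k, and θ_ki^j(u_n) → β with β ∈ (0, π). Then the sequence log A_ijk(u_n) − u_{i,n} − t_n converges; in particular there is a convergent sequence (C_n) with log A_ijk(u_n) = C_n + u_{i,n} + t_n. -/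
open Real Filter Topology

/-! Writing `l_ij = e^{u_i} · elen(0, u_j - u_i)` and `l_jk = e^{t} · elen(u_j - t, u_k - t)`,
the normalized edge length `l_ij e^{-u_i}` tends to `r_i` because `e^{u_j - u_i} → 0`, and
`l_jk e^{-t}` tends to the length of the limit edge. Taking logarithms in
`A_ijk = ½ l_ij l_jk sin θ_ki^j`, the remaining term `log sin θ_ki^j` tends to `log sin β`,
which is finite since `β ∈ (0, π)`. -/

section EdgeLength

variable {I ra rb : ℝ}

lemma elen_pos (hI : 0 ≤ I) (hra : 0 < ra) (hrb : 0 < rb) (x y : ℝ) :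
    0 < elen I ra rb x y := by
  unfold elen
  positivity

lemma elen_add_add (I ra rb x y s : ℝ) :
    elen I ra rb (x + s) (y + s) = exp s * elen I ra rb x y := by
  unfold elen
  rw [show (exp (x + s) * ra) ^ 2 + (exp (y + s) * rb) ^ 2 +
      2 * I * (exp (x + s) * ra) * (exp (y + s) * rb)
      = exp s ^ 2 * ((exp x * ra) ^ 2 + (exp y * rb) ^ 2 +
        2 * I * (exp x * ra) * (exp y * rb)) by
    rw [exp_add, exp_add]; ring]
  rw [sqrt_mul (by positivity), sqrt_sq (exp_nonneg s)]

lemma log_elen_sub (hI : 0 ≤ I) (hra : 0 < ra) (hrb : 0 < rb) (x y s : ℝ) :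
    log (elen I ra rb x y) - s = log (elen I ra rb (x - s) (y - s)) := by
  conv_lhs => rw [← sub_add_cancel x s, ← sub_add_cancel y s, elen_add_add]
  rw [log_mul (exp_ne_zero s) (elen_pos hI hra hrb _ _).ne', log_exp, add_sub_cancel_left]

lemma continuous_elen (I ra rb : ℝ) : Continuous fun p : ℝ × ℝ => elen I ra rb p.1 p.2 := by
  unfold elen
  fun_prop

variable {α : Type*} {l : Filter α} {x y s : α → ℝ} {x₀ y₀ : ℝ}

lemma tendsto_log_elen_sub (hI : 0 ≤ I) (hra : 0 < ra) (hrb : 0 < rb)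
    (hx : Tendsto (fun n => x n - s n) l (𝓝 x₀)) (hy : Tendsto (fun n => y n - s n) l (𝓝 y₀)) :
    Tendsto (fun n => log (elen I ra rb (x n) (y n)) - s n) l
      (𝓝 (log (elen I ra rb x₀ y₀))) := by
  have hlim := ((continuous_elen I ra rb).tendsto (x₀, y₀)).comp (hx.prodMk_nhds hy)
  exact (hlim.log (elen_pos hI hra hrb x₀ y₀).ne').congr fun n =>
    (log_elen_sub hI hra hrb (x n) (y n) (s n)).symm

lemma tendsto_log_elen_sub_of_tendsto_atBot (hI : 0 ≤ I) (hra : 0 < ra) (hrb : 0 < rb)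
    (hx : Tendsto (fun n => x n - s n) l (𝓝 x₀)) (hy : Tendsto (fun n => y n - s n) l atBot) :
    Tendsto (fun n => log (elen I ra rb (x n) (y n)) - s n) l (𝓝 (x₀ + log ra)) := by
  have hcont : Continuous fun p : ℝ × ℝ =>
      sqrt ((exp p.1 * ra) ^ 2 + (p.2 * rb) ^ 2 + 2 * I * (exp p.1 * ra) * (p.2 * rb)) := by
    fun_prop
  -- `elen` is a continuous function of `(x, e^y)`, and `e^y → 0`.
  have hlim : Tendsto (fun n => elen I ra rb (x n - s n) (y n - s n)) l (𝓝 (exp x₀ * ra)) := by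
    convert (hcont.tendsto (x₀, 0)).comp (hx.prodMk_nhds (tendsto_exp_atBot.comp hy)) using 2
    · rfl
    · simp only [zero_mul, mul_zero, add_zero, zero_pow two_ne_zero]
      exact (sqrt_sq (by positivity : 0 ≤ exp x₀ * ra)).symm
  rw [← log_exp x₀, ← log_mul (exp_ne_zero x₀) hra.ne']
  exact (hlim.log (by positivity)).congr fun n => (log_elen_sub hI hra hrb (x n) (y n) (s n)).symm

end EdgeLength

lemma log_area_eq {ri rj rk Iij Ijk Iki ui uj uk : ℝ} (hri : 0 < ri) (hrj : 0 < rj)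
    (hrk : 0 < rk) (hIij : 0 ≤ Iij) (hIjk : 0 ≤ Ijk)
    (hsin : 0 < sin (ThJ ri rj rk Iij Ijk Iki ui uj uk)) :
    log (Area ri rj rk Iij Ijk Iki ui uj uk) = log (1 / 2) + log (elen Iij ri rj ui uj) +
      log (elen Ijk rj rk uj uk) + log (sin (ThJ ri rj rk Iij Ijk Iki ui uj uk)) := by
  have hLij := elen_pos hIij hri hrj ui uj
  have hLjk := elen_pos hIjk hrj hrk uj uk
  rw [Area, Lij, Ljk, log_mul (by positivity) hsin.ne', log_mul (by positivity) hLjk.ne',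
    log_mul (by norm_num) hLij.ne']

theorem log_area_asymptotics_divergent_general (ri rj rk Iij Ijk Iki : ℝ) (hri : 0 < ri) (hrj : 0 < rj) (hrk : 0 < rk)
    (hIij : 1 < Iij) (hIjk : 1 < Ijk)
    (a b c t : ℕ → ℝ) (aj ak β : ℝ)
    (ha : Tendsto (fun n => a n - t n) atTop atTop)
    (hb : Tendsto (fun n => b n - t n) atTop (𝓝 aj))
    (hc : Tendsto (fun n => c n - t n) atTop (𝓝 ak))
    (hβ : β ∈ Set.Ioo (0:ℝ) π)
    (hθj : Tendsto (fun n => ThJ ri rj rk Iij Ijk Iki (a n) (b n) (c n)) atTop (𝓝 β)) :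
    ∃ Lm : ℝ, Tendsto (fun n => Real.log (Area ri rj rk Iij Ijk Iki (a n) (b n) (c n)) - a n - t n)
      atTop (𝓝 Lm) := by
  have hsin : Tendsto (fun n => sin (ThJ ri rj rk Iij Ijk Iki (a n) (b n) (c n))) atTop
      (𝓝 (sin β)) := (continuous_sin.tendsto β).comp hθj
  have hsinβ : 0 < sin β := sin_pos_of_pos_of_lt_pi hβ.1 hβ.2
  have hba : Tendsto (fun n => b n - a n) atTop atBot :=
    (hb.add_atBot (tendsto_neg_atBot_iff.2 ha)).congr fun n => by ring
  have hij := tendsto_log_elen_sub_of_tendsto_atBot (I := Iij) (x := a) (by linarith) hri hrj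
    (tendsto_const_nhds.congr fun n => (sub_self (a n)).symm) hba
  have hjk := tendsto_log_elen_sub (I := Ijk) (by linarith) hrj hrk hb hc
  refine ⟨_, (((tendsto_const_nhds (x := log (1 / 2))).add hij).add hjk).add
    (hsin.log hsinβ.ne') |>.congr' ?_⟩
  filter_upwards [hsin.eventually (eventually_gt_nhds hsinβ)] with n hn
  rw [log_area_eq hri hrj hrk (by linarith) (by linarith) hn]
  ring

/-- If `u_i,n - t_n → +∞`, `u_j,n - t_n` and `u_k,n - t_n` converge and
`θ_ki^j → β ∈ (0, π)`, then `log A_ijk(u_n) - u_i,n - t_n` converges. -/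
theorem log_area_asymptotics_divergent (ri rj rk Iij Ijk Iki : ℝ) (hri : 0 < ri) (hrj : 0 < rj) (hrk : 0 < rk)
    (hIij : 1 < Iij) (hIjk : 1 < Ijk) (hIki : 1 < Iki)
    (a b c t : ℕ → ℝ) (aj ak β : ℝ)
    (hnd : ∀ n, NondegT ri rj rk Iij Ijk Iki (a n) (b n) (c n))
    (ha : Tendsto (fun n => a n - t n) atTop atTop)
    (hb : Tendsto (fun n => b n - t n) atTop (𝓝 aj))
    (hc : Tendsto (fun n => c n - t n) atTop (𝓝 ak))
    (hβ : β ∈ Set.Ioo (0:ℝ) π)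
    (hθj : Tendsto (fun n => ThJ ri rj rk Iij Ijk Iki (a n) (b n) (c n)) atTop (𝓝 β)) :
    ∃ Lm : ℝ, Tendsto (fun n => Real.log (Area ri rj rk Iij Ijk Iki (a n) (b n) (c n)) - a n - t n)
      atTop (𝓝 Lm) :=
  log_area_asymptotics_divergent_general ri rj rk Iij Ijk Iki hri hrj hrk hIij hIjk a b c t aj ak β
    ha hb hc hβ hθj
end
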